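/- arXiv:2210.08691 — 2 statements merged into one kernel-verified Lean document; each statement's English description precedes it below -/
import Mathlib

section
/- Let A be a semiperfect ring and M a finitely generated A-module. If the natural surjection M → M/JM (where J is the Jacobson radical of A) factors through a projective A-module, then M is projective. -/
/-!
Let `q : Q → M` be a projective cover. Lifting the given map `P → M/JM` along
`Q → M → M/JM` and composing with `s` gives `ψ : M → Q` with `q ∘ ψ ≡ id` modulo `JM`.
By Nakayama `q ∘ ψ` is onto, so `range ψ + ker q = Q`, and since `ker q` is superfluous,
`ψ` is onto.
Since `Q` is projective, `ψ` splits, so `ker ψ` is a direct summand of `M` contained in `JM`;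
Nakayama again gives `ker ψ = 0`, hence `M ≅ Q` is projective.
-/

open CategoryTheory Limits Opposite

universe u

noncomputable section

namespace Paper

variable (A : Type u) [Ring A]

/-- The `i`-th Ext group `Ext_A^i(M,N)` vanishes. -/
def extVanish (M N : ModuleCat.{u} A) (i : ℕ) : Prop :=
  Subsingleton (((Ext ℤ (ModuleCat.{u} A) i).obj (op M)).obj N)

/-- Projective dimension at most `d`, characterized by Ext vanishing. -/
def projDimLE (M : ModuleCat.{u} A) (d : ℕ) : Prop :=
  ∀ (N : ModuleCat.{u} A) (i : ℕ), d < i → extVanish A M N i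

/-- Projective dimension, as an element of `ℕ∞` (`⊤` if infinite). -/
def projDim (M : ModuleCat.{u} A) : ℕ∞ :=
  sInf {c : ℕ∞ | ∃ d : ℕ, c = d ∧ projDimLE A M d}

/-- Injective dimension at most `d`, characterized by Ext vanishing. -/
def injDimLE (N : ModuleCat.{u} A) (d : ℕ) : Prop :=
  ∀ (M : ModuleCat.{u} A) (i : ℕ), d < i → extVanish A M N i

/-- Injective dimension, as an element of `ℕ∞` (`⊤` if infinite). -/
def injDim (N : ModuleCat.{u} A) : ℕ∞ :=
  sInf {c : ℕ∞ | ∃ d : ℕ, c = d ∧ injDimLE A N d}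

/-- (Left) global dimension. -/
def glDim : ℕ∞ := ⨆ M : ModuleCat.{u} A, projDim A M

/-- `p : P →ₗ[A] M` is a projective cover: `P` is projective, `p` is surjective and
its kernel is superfluous (small) in `P`. -/
def IsProjectiveCover {M P : Type u} [AddCommGroup M] [Module A M]
    [AddCommGroup P] [Module A P] (p : P →ₗ[A] M) : Prop :=
  Module.Projective A P ∧ Function.Surjective p ∧
    ∀ N : Submodule A P, N ⊔ LinearMap.ker p = ⊤ → N = ⊤

/-- A ring is semiperfect if every finitely generated (left) module admits a
projective cover. -/
def IsSemiperfectRing : Prop :=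
  ∀ (M : Type u) (_ : AddCommGroup M) (_ : Module A M), Module.Finite A M →
    ∃ (P : Type u) (_ : AddCommGroup P) (_ : Module A P) (p : P →ₗ[A] M),
      IsProjectiveCover A p

/-- The Jacobson radical of the ring `A`. -/
def jac : Ideal A := (⊥ : Ideal A).jacobson

/-- `p : P ⟶ M` in `ModuleCat A` is a projective cover. -/
def IsProjectiveCoverHom {P M : ModuleCat.{u} A} (p : P ⟶ M) : Prop :=
  Projective P ∧ Function.Surjective p ∧
    ∀ N : Submodule A P, N ⊔ LinearMap.ker p.hom = ⊤ → N = ⊤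

/-- `IsSyzygy n M K` : `K` is an `n`-th syzygy of `M` with respect to a minimal
projective resolution (built from projective covers). -/
def IsSyzygy : ℕ → ModuleCat.{u} A → ModuleCat.{u} A → Prop
  | 0, M, K => Nonempty (K ≅ M)
  | n + 1, M, K => ∃ (P : ModuleCat.{u} A) (p : P ⟶ M), IsProjectiveCoverHom A p ∧
      IsSyzygy n (ModuleCat.of A (LinearMap.ker p.hom)) K

/-- Dominant dimension at least `n`: there is an injective coresolution whose first
`n` terms are projective-injective (equivalently, the first `n` terms of the
minimal injective coresolution are projective). -/
def DomDimGE : ℕ → ModuleCat.{u} A → Prop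
  | 0, _ => True
  | n + 1, M => ∃ (I : ModuleCat.{u} A) (f : M ⟶ I), Injective I ∧ Projective I ∧
      Mono f ∧ DomDimGE n (cokernel f)

/-- Dominant dimension. -/
def domDim (M : ModuleCat.{u} A) : ℕ∞ :=
  sSup {c : ℕ∞ | ∃ n : ℕ, c = n ∧ DomDimGE A n M}

/-- Codominant dimension at least `n` (dual to dominant dimension, via projective
resolutions with projective-injective terms). -/
def CodomDimGE : ℕ → ModuleCat.{u} A → Prop
  | 0, _ => True
  | n + 1, M => ∃ (P : ModuleCat.{u} A) (f : P ⟶ M), Projective P ∧ Injective P ∧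
      Epi f ∧ CodomDimGE n (kernel f)

/-- Codominant dimension. -/
def codomDim (M : ModuleCat.{u} A) : ℕ∞ :=
  sSup {c : ℕ∞ | ∃ n : ℕ, c = n ∧ CodomDimGE A n M}

/-- A module is Gorenstein injective if it is a cycle of an acyclic complex of
injectives which stays acyclic after applying `Hom(I,-)` for every injective `I`. -/
def GorensteinInjective (N : ModuleCat.{u} A) : Prop :=
  ∃ C : CochainComplex (ModuleCat.{u} A) ℤ,
    (∀ n : ℤ, Injective (C.X n)) ∧ (∀ n : ℤ, C.ExactAt n) ∧
    Nonempty (N ≅ kernel (C.d 0 1)) ∧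
    ∀ (I : ModuleCat.{u} A), Injective I → ∀ n : ℤ,
      ((((preadditiveCoyoneda.obj (op I)).mapHomologicalComplex
        (ComplexShape.up ℤ)).obj C).ExactAt n)

/-- Gorenstein injective dimension at most `d`: there is a coresolution of length
at most `d` by Gorenstein injective modules. -/
def GinjDimLE : ℕ → ModuleCat.{u} A → Prop
  | 0, N => GorensteinInjective A N
  | n + 1, N => GorensteinInjective A N ∨
      ∃ (G : ModuleCat.{u} A) (f : N ⟶ G), GorensteinInjective A G ∧ Mono f ∧
        GinjDimLE n (cokernel f)

/-- Gorenstein injective dimension, as an element of `ℕ∞`. -/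
def ginjDim (N : ModuleCat.{u} A) : ℕ∞ :=
  sInf {c : ℕ∞ | ∃ d : ℕ, c = d ∧ GinjDimLE A d N}

/-- Finitistic projective dimension: the supremum of the projective dimensions of
finitely generated modules of finite projective dimension. -/
def fpDim : ℕ∞ :=
  sSup {c : ℕ∞ | ∃ M : ModuleCat.{u} A, Module.Finite A M ∧ projDim A M = c ∧ c ≠ ⊤}

/-- Finitistic injective dimension: the supremum of the injective dimensions of
finitely generated modules of finite injective dimension. -/
def fiDim : ℕ∞ :=
  sSup {c : ℕ∞ | ∃ M : ModuleCat.{u} A, Module.Finite A M ∧ injDim A M = c ∧ c ≠ ⊤}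

/-- A ring is connected (indecomposable) if it is nontrivial and has no nontrivial
central idempotents. -/
def RingConnected : Prop :=
  Nontrivial A ∧ ∀ e : A, IsIdempotentElem e → e ∈ Subring.center A → e = 0 ∨ e = 1

/-- Iwanaga-Gorenstein: noetherian on both sides, with finite self-injective
dimension on both sides. -/
def IsIwanagaGorenstein : Prop :=
  IsNoetherianRing A ∧ IsNoetherianRing Aᵐᵒᵖ ∧
    injDim A (ModuleCat.of A A) ≠ ⊤ ∧ injDim Aᵐᵒᵖ (ModuleCat.of Aᵐᵒᵖ Aᵐᵒᵖ) ≠ ⊤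

/-- Minimal Auslander-Gorenstein: Iwanaga-Gorenstein with `inj dim A ≤ dom dim A`. -/
def IsMinimalAuslanderGorenstein : Prop :=
  IsIwanagaGorenstein A ∧ injDim A (ModuleCat.of A A) ≤ domDim A (ModuleCat.of A A)

end Paper

open Submodule

namespace Paper

variable {A : Type*} [Ring A] {I : Ideal A} {M Q : Type*} [AddCommGroup M] [Module A M]
  [AddCommGroup Q] [Module A Q]

theorem eq_top_of_sup_smul_top_eq_top [Module.Finite A M] (hI : I ≤ Ring.jacobson A)
    {N : Submodule A M} (h : N ⊔ I • ⊤ = ⊤) : N = ⊤ := by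
  rw [← Submodule.Quotient.subsingleton_iff, ← Submodule.subsingleton_iff A,
    ← subsingleton_iff_bot_eq_top, eq_comm]
  refine FG.eq_bot_of_le_jacobson_smul Module.Finite.fg_top
    ((le_of_eq ?_).trans (smul_mono_left hI))
  have := congrArg (map N.mkQ) h
  rwa [Submodule.map_sup, map_smul'', Submodule.map_top, range_mkQ, mkQ_map_self, bot_sup_eq,
    eq_comm] at this

theorem surjective_of_mkQ_comp_comp_eq_mkQ [Module.Finite A M] (hI : I ≤ Ring.jacobson A)
    {q : Q →ₗ[A] M} (hq : ∀ N : Submodule A Q, N ⊔ LinearMap.ker q = ⊤ → N = ⊤)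
    {ψ : M →ₗ[A] Q}
    (hψ : (I • ⊤ : Submodule A M).mkQ ∘ₗ q ∘ₗ ψ = (I • ⊤ : Submodule A M).mkQ) :
    Function.Surjective ψ := by
  have hqψ : LinearMap.range (q ∘ₗ ψ) = ⊤ := by
    refine eq_top_of_sup_smul_top_eq_top hI (eq_top_iff.2 fun m _ ↦ ?_)
    have hm : m - q (ψ m) ∈ (I • ⊤ : Submodule A M) := by
      rw [← ker_mkQ (I • ⊤), LinearMap.mem_ker, map_sub, ← LinearMap.congr_fun hψ m]
      exact sub_self _
    simpa using add_mem_sup (LinearMap.mem_range_self (q ∘ₗ ψ) m) hm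
  rw [← LinearMap.range_eq_top]
  apply hq
  rw [← comap_map_eq, ← LinearMap.range_comp, hqψ, comap_top]

theorem ker_eq_bot_of_comp_eq_id_of_ker_le [Module.Finite A M] (hI : I ≤ Ring.jacobson A)
    {ψ : M →ₗ[A] Q} {r : Q →ₗ[A] M} (hr : ψ ∘ₗ r = LinearMap.id)
    (hker : LinearMap.ker ψ ≤ I • ⊤) : LinearMap.ker ψ = ⊥ := by
  set e : M →ₗ[A] M := LinearMap.id - r ∘ₗ ψ
  have he : ∀ x ∈ LinearMap.ker ψ, e x = x := fun x hx ↦ by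
    simp [e, LinearMap.mem_ker.1 hx]
  have hrange : map e ⊤ = LinearMap.ker ψ := by
    refine le_antisymm ?_ fun x hx ↦ ⟨x, trivial, he x hx⟩
    rintro _ ⟨x, -, rfl⟩
    simp [e, LinearMap.mem_ker, ← LinearMap.comp_apply ψ r, hr]
  refine FG.eq_bot_of_le_jacobson_smul (hrange ▸ Module.Finite.fg_top.map e) fun x hx ↦ ?_
  rw [← hrange, ← map_smul'']
  exact ⟨x, smul_mono_left hI (hker hx), he x hx⟩

end Paper

open Paper in
theorem statement_0 (A : Type u) [Ring A] (hA : IsSemiperfectRing A)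
    (M : Type u) [AddCommGroup M] [Module A M] [Module.Finite A M]
    (hfac : ∃ (P : Type u) (_ : AddCommGroup P) (_ : Module A P)
      (_ : Module.Projective A P) (s : M →ₗ[A] P)
      (p : P →ₗ[A] (M ⧸ (jac A • (⊤ : Submodule A M)))),
      p ∘ₗ s = (jac A • (⊤ : Submodule A M)).mkQ) :
    Module.Projective A M := by
  obtain ⟨P, _, _, _, s, p, hps⟩ := hfac
  obtain ⟨Q, _, _, q, _, hq, hsmall⟩ := hA M ‹_› ‹_› ‹_›
  have hJ : jac A ≤ Ring.jacobson A := Ideal.jacobson_bot.le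
  obtain ⟨h, hh⟩ := Module.projective_lifting_property (mkQ _ ∘ₗ q) p
    ((mkQ_surjective _).comp hq)
  set ψ := h ∘ₗ s
  have hψ : mkQ _ ∘ₗ q ∘ₗ ψ = mkQ (jac A • (⊤ : Submodule A M)) :=
    (congrArg (· ∘ₗ s) hh).trans hps
  have hψ_surj := surjective_of_mkQ_comp_comp_eq_mkQ hJ hsmall hψ
  obtain ⟨r, hr⟩ := Module.projective_lifting_property ψ LinearMap.id hψ_surj
  have hker : LinearMap.ker ψ ≤ jac A • ⊤ := fun x hx ↦ by
    rw [← ker_mkQ (jac A • ⊤), LinearMap.mem_ker, ← LinearMap.congr_fun hψ x]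
    simp [LinearMap.mem_ker.1 hx]
  have hψ_inj := LinearMap.ker_eq_bot.1 (ker_eq_bot_of_comp_eq_id_of_ker_le hJ hr hker)
  exact Module.Projective.of_equiv (LinearEquiv.ofBijective ψ ⟨hψ_inj, hψ_surj⟩).symm
end
end

section
/- Let A be a semiperfect noetherian ring with Jacobson radical J, M a finitely generated A-module, and d ≥ 0 an integer. If Ext_A^{d+1}(M, J) = 0, then the projective dimension of M is at most d. -/
open CategoryTheory Limits Opposite

universe u

noncomputable section

/-!
Build a minimal projective resolution `⋯ → P₁ → P₀ → M` of `M` out of projective covers, with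
syzygies `Ωⁿ⁺¹ = ker (Pₙ → Ωⁿ)`; this is possible because `A` is semiperfect and noetherian.
Computing `Ext` with it, `Ext^{d+1}(M, J) = 0` says that every map `Ω^{d+1} → J` extends to `P_d`.
Since `Ω^{d+1}` is superfluous in `P_d`, it lies in the radical of `P_d`, so the coordinates of
`Ω^{d+1}` in a splitting `P_d ⊆ Aⁿ` take values in `J`; extending them gives an endomorphism `e`
of `P_d` with image in `J P_d` that is the identity on `Ω^{d+1}`. By Nakayama `1 - e` is
surjective, hence injective as `P_d` is noetherian, and it kills `Ω^{d+1}`. So `Ω^{d+1} = 0`, all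
later terms of the resolution vanish, and `Ext^i(M, -) = 0` for `i > d`.
-/

namespace Submodule

variable {R P : Type*} [Ring R] [AddCommGroup P] [Module R P]

theorem le_jacobson_of_forall_sup_eq_top {K : Submodule R P}
    (hK : ∀ N : Submodule R P, N ⊔ K = ⊤ → N = ⊤) : K ≤ Module.jacobson R P :=
  le_sInf fun L hL => by
    by_contra h
    exact hL.1 (hK L (hL.2 _ (left_lt_sup.2 h)))

theorem eq_top_of_sup_jacobson_smul_eq_top [Module.Finite R P] {N : Submodule R P}
    (h : N ⊔ Ring.jacobson R • ⊤ = ⊤) : N = ⊤ := by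
  by_contra hN
  obtain ⟨L, hL, hNL⟩ := (eq_top_or_exists_le_coatom N).resolve_left hN
  have hJL : Ring.jacobson R • ⊤ ≤ L := (Ring.jacobson_smul_top_le R P).trans (sInf_le hL)
  exact hL.1 (top_le_iff.1 (h ▸ sup_le hNL hJL))

theorem eq_bot_of_forall_apply_eq_self_of_range_le_jacobson_smul [IsNoetherian R P]
    {K : Submodule R P} (e : P →ₗ[R] P) (he : LinearMap.range e ≤ Ring.jacobson R • ⊤)
    (hK : ∀ k ∈ K, e k = k) : K = ⊥ := by
  set f := LinearMap.id - e
  have hrange : LinearMap.range f ⊔ Ring.jacobson R • ⊤ = ⊤ := by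
    refine eq_top_iff.2 fun x _ => ?_
    rw [show x = f x + e x by simp [f]]
    exact add_mem (mem_sup_left (LinearMap.mem_range_self f x))
      (mem_sup_right (he (LinearMap.mem_range_self e x)))
  have hf : Function.Injective f := IsNoetherian.injective_of_surjective_endomorphism f
    (LinearMap.range_eq_top.1 (eq_top_of_sup_jacobson_smul_eq_top hrange))
  refine eq_bot_iff.2 fun k hk => (mem_bot R).2 (hf ?_)
  simp [f, hK k hk]

theorem exists_range_le_jacobson_smul_of_forall_extend [Module.Projective R P]
    [Module.Finite R P] {K : Submodule R P} (hKJ : K ≤ Module.jacobson R P)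
    (hext : ∀ φ : K →ₗ[R] Ring.jacobson R, ∃ g : P →ₗ[R] Ring.jacobson R, g ∘ₗ K.subtype = φ) :
    ∃ e : P →ₗ[R] P, LinearMap.range e ≤ Ring.jacobson R • ⊤ ∧ ∀ k ∈ K, e k = k := by
  obtain ⟨n, π, hπ⟩ := Module.Finite.exists_fin' R P
  obtain ⟨s, hs⟩ := Module.projective_lifting_property π LinearMap.id hπ
  have hsK (j : Fin n) (k : K) : s k j ∈ Ring.jacobson R :=
    mem_comap.1 (Module.le_comap_jacobson (LinearMap.proj j ∘ₗ s) (hKJ k.2))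
  choose g hg using fun j => hext ((LinearMap.proj j ∘ₗ s ∘ₗ K.subtype).codRestrict _ (hsK j))
  refine ⟨π ∘ₗ LinearMap.pi fun j => (Ring.jacobson R).subtype ∘ₗ g j, ?_, fun k hk => ?_⟩
  · rintro _ ⟨x, rfl⟩
    rw [LinearMap.comp_apply, pi_eq_sum_univ (LinearMap.pi _ x), map_sum]
    refine sum_mem fun j _ => ?_
    rw [map_smul]
    exact smul_mem_smul (g j x).2 mem_top
  · have (j : Fin n) : (g j k : R) = s k j :=
      congrArg Subtype.val (LinearMap.congr_fun (hg j) ⟨k, hk⟩)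
    calc _ = π (s k) := congrArg π (funext this)
      _ = k := LinearMap.congr_fun hs k

theorem eq_bot_of_forall_sup_eq_top_of_forall_extend [Module.Projective R P] [IsNoetherian R P]
    {K : Submodule R P} (hK : ∀ N : Submodule R P, N ⊔ K = ⊤ → N = ⊤)
    (hext : ∀ φ : K →ₗ[R] Ring.jacobson R, ∃ g : P →ₗ[R] Ring.jacobson R, g ∘ₗ K.subtype = φ) :
    K = ⊥ :=
  let ⟨e, he, heK⟩ := exists_range_le_jacobson_smul_of_forall_extend
    (le_jacobson_of_forall_sup_eq_top hK) hext
  eq_bot_of_forall_apply_eq_self_of_range_le_jacobson_smul e he heK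

end Submodule

namespace LinearMap

variable {R P N : Type*} [Ring R] [AddCommGroup P] [Module R P] [AddCommGroup N] [Module R N]

theorem finite_of_surjective_of_forall_sup_ker_eq_top [Module.Finite R N] (p : P →ₗ[R] N)
    (hp : Function.Surjective p) (hsmall : ∀ L : Submodule R P, L ⊔ ker p = ⊤ → L = ⊤) :
    Module.Finite R P := by
  obtain ⟨n, s, hs⟩ := Module.Finite.exists_fin (R := R) (M := N)
  choose t ht using fun i => hp (s i)
  have hmap : (Submodule.span R (Set.range t)).map p = ⊤ := by
    rw [Submodule.map_span, ← Set.range_comp, ← hs]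
    exact congrArg _ (congrArg Set.range (funext ht))
  refine Module.finite_def.2 ?_
  rw [← hsmall _ (by rw [← Submodule.comap_map_eq, hmap, Submodule.comap_top])]
  exact Submodule.fg_span (Set.finite_range t)

theorem subsingleton_of_forall_sup_ker_eq_top [Subsingleton N] (p : P →ₗ[R] N)
    (hsmall : ∀ L : Submodule R P, L ⊔ ker p = ⊤ → L = ⊤) : Subsingleton P := by
  have hker : ker p = ⊤ := eq_top_iff.2 fun x _ => Subsingleton.elim _ _
  exact (Submodule.subsingleton_iff R).1 (subsingleton_of_bot_eq_top (hsmall ⊥ (by simp [hker])))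

end LinearMap

namespace CategoryTheory.ProjectiveResolution

variable {R : Type*} [Ring R] {C : Type*} [Category C] [Abelian C] [Linear R C]
  [EnoughProjectives C] {X : C} (P : ProjectiveResolution X)

theorem isZero_ext_of_isZero {n : ℕ} (hn : IsZero (P.complex.X n)) (Y : C) :
    IsZero (((Ext R C n).obj (op X)).obj Y) := by
  refine IsZero.of_iso ?_ (P.isoExt n Y)
  rw [← HomologicalComplex.exactAt_iff_isZero_homology, HomologicalComplex.exactAt_iff]
  refine ShortComplex.exact_of_isZero_X₂ _ ?_
  rw [ModuleCat.isZero_iff_subsingleton]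
  exact ⟨fun f g => hn.eq_of_src f g⟩

theorem exists_d_comp_eq_of_isZero_ext {n : ℕ} {Y : C}
    (h : IsZero (((Ext R C (n + 1)).obj (op X)).obj Y)) (f : P.complex.X (n + 1) ⟶ Y)
    (hf : P.complex.d (n + 2) (n + 1) ≫ f = 0) :
    ∃ g : P.complex.X n ⟶ Y, P.complex.d (n + 1) n ≫ g = f := by
  have hexact := (HomologicalComplex.exactAt_iff_isZero_homology _ _).2
    (h.of_iso (P.isoExt (n + 1) Y).symm)
  rw [HomologicalComplex.exactAt_iff' _ n (n + 1) (n + 2) (by simp) (by simp),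
    ShortComplex.moduleCat_exact_iff] at hexact
  exact hexact f hf

end CategoryTheory.ProjectiveResolution

namespace Paper.IsSemiperfectRing

variable {A : Type u} [Ring A]

/-- The conclusion is weakened to an implication so that a cover can be chosen for every module,
which keeps `syzygy` below free of finiteness side conditions. -/
theorem exists_cover (hA : IsSemiperfectRing A) (N : ModuleCat.{u} A) :
    ∃ (P : ModuleCat.{u} A) (p : P ⟶ N), Module.Finite A N → IsProjectiveCoverHom A p := by
  by_cases hN : Module.Finite A N
  · obtain ⟨P, _, _, p, hP, hp, hsmall⟩ := hA N _ _ hN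
    exact ⟨ModuleCat.of A P, ModuleCat.ofHom p,
      fun _ => ⟨(IsProjective.iff_projective _).1 hP, hp, hsmall⟩⟩
  · exact ⟨N, 𝟙 N, fun h => absurd h hN⟩

variable (hA : IsSemiperfectRing A)

def coverObj (N : ModuleCat.{u} A) : ModuleCat.{u} A := (hA.exists_cover N).choose

def cover (N : ModuleCat.{u} A) : hA.coverObj N ⟶ N := (hA.exists_cover N).choose_spec.choose

theorem isProjectiveCoverHom_cover (N : ModuleCat.{u} A) [Module.Finite A N] :
    IsProjectiveCoverHom A (hA.cover N) :=
  (hA.exists_cover N).choose_spec.choose_spec ‹_›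

instance (N : ModuleCat.{u} A) [Module.Finite A N] : Module.Finite A (hA.coverObj N) :=
  let h := hA.isProjectiveCoverHom_cover N
  (hA.cover N).hom.finite_of_surjective_of_forall_sup_ker_eq_top h.2.1 h.2.2

variable (M : ModuleCat.{u} A)

def syzygy : ℕ → ModuleCat.{u} A
  | 0 => M
  | n + 1 => ModuleCat.of A (LinearMap.ker (hA.cover (syzygy n)).hom)

abbrev term (n : ℕ) : ModuleCat.{u} A := hA.coverObj (hA.syzygy M n)

abbrev termπ (n : ℕ) : hA.term M n ⟶ hA.syzygy M n := hA.cover _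

def syzygyι (n : ℕ) : hA.syzygy M (n + 1) ⟶ hA.term M n :=
  ModuleCat.ofHom (LinearMap.ker (hA.termπ M n).hom).subtype

@[simp]
theorem syzygyι_termπ (n : ℕ) : hA.syzygyι M n ≫ hA.termπ M n = 0 := by
  ext x
  exact x.2

@[simp]
theorem syzygyι_termπ_assoc (n : ℕ) {Z : ModuleCat.{u} A} (f : hA.syzygy M n ⟶ Z) :
    hA.syzygyι M n ≫ hA.termπ M n ≫ f = 0 := by
  rw [← Category.assoc, syzygyι_termπ, zero_comp]

def minimalComplex : ChainComplex (ModuleCat.{u} A) ℕ :=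
  ChainComplex.of (hA.term M) (fun n => hA.termπ M (n + 1) ≫ hA.syzygyι M n) fun n => by simp

theorem minimalComplex_d (n : ℕ) :
    (hA.minimalComplex M).d (n + 1) n = hA.termπ M (n + 1) ≫ hA.syzygyι M n :=
  ChainComplex.of_d (hA.term M) (fun n => hA.termπ M (n + 1) ≫ hA.syzygyι M n) n

variable [IsNoetherianRing A]

instance [Module.Finite A M] (n : ℕ) : Module.Finite A (hA.syzygy M n) := by
  induction n with
  | zero => assumption
  | succ n ih => exact inferInstanceAs (Module.Finite A (LinearMap.ker (hA.cover _).hom))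

variable [Module.Finite A M]

theorem isProjectiveCoverHom_termπ (n : ℕ) : IsProjectiveCoverHom A (hA.termπ M n) :=
  hA.isProjectiveCoverHom_cover _

theorem exact_termπ_comp_syzygyι (n : ℕ) :
    (ShortComplex.mk (hA.termπ M (n + 1) ≫ hA.syzygyι M n) (hA.termπ M n) (by simp)).Exact := by
  rw [ShortComplex.moduleCat_exact_iff]
  intro x hx
  obtain ⟨y, hy⟩ := (hA.isProjectiveCoverHom_termπ M (n + 1)).2.1 ⟨x, hx⟩
  exact ⟨y, congrArg Subtype.val hy⟩

instance (n : ℕ) : Epi (hA.termπ M n) :=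
  (ModuleCat.epi_iff_surjective _).2 (hA.isProjectiveCoverHom_termπ M n).2.1

def minimalResolution : ProjectiveResolution M where
  complex := hA.minimalComplex M
  projective n := (hA.isProjectiveCoverHom_termπ M n).1
  π := (ChainComplex.toSingle₀Equiv _ _).symm ⟨hA.termπ M 0, by
    rw [minimalComplex_d]
    exact (Category.assoc _ _ _).trans ((hA.termπ M 1 ≫= hA.syzygyι_termπ M 0).trans comp_zero)⟩
  quasiIso := ⟨fun n => by
    cases n with
    | zero =>
      rw [ChainComplex.quasiIsoAt₀_iff, ShortComplex.quasiIso_iff_of_zeros']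
      · exact ⟨hA.exact_termπ_comp_syzygyι M 0, inferInstanceAs (Epi (hA.termπ M 0))⟩
      all_goals rfl
    | succ n =>
      rw [quasiIsoAt_iff_exactAt' _ _ (ChainComplex.exactAt_succ_single_obj _ _),
        HomologicalComplex.exactAt_iff' _ (n + 1 + 1) (n + 1) n (by simp) (by simp),
        ShortComplex.moduleCat_exact_iff]
      intro x hx
      simp only [HomologicalComplex.shortComplexFunctor'_obj_g, minimalComplex_d] at hx
      obtain ⟨y, hy⟩ := (ShortComplex.moduleCat_exact_iff _).1
        (hA.exact_termπ_comp_syzygyι M (n + 1)) x (Subtype.ext hx)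
      exact ⟨y, by simpa only [HomologicalComplex.shortComplexFunctor'_obj_f, minimalComplex_d]⟩⟩

theorem exists_syzygyι_comp_eq_of_isZero_ext {n : ℕ} {Y : ModuleCat.{u} A}
    (h : IsZero (((Ext ℤ (ModuleCat.{u} A) (n + 1)).obj (op M)).obj Y))
    (φ : hA.syzygy M (n + 1) ⟶ Y) : ∃ g : hA.term M n ⟶ Y, hA.syzygyι M n ≫ g = φ := by
  obtain ⟨g, hg⟩ := (hA.minimalResolution M).exists_d_comp_eq_of_isZero_ext h
    (hA.termπ M (n + 1) ≫ φ) <| calc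
      _ = (hA.termπ M (n + 2) ≫ hA.syzygyι M (n + 1)) ≫ hA.termπ M (n + 1) ≫ φ := by
        rw [← minimalComplex_d]; rfl
      _ = 0 := by simp
  refine ⟨g, (cancel_epi (hA.termπ M (n + 1))).1 ?_⟩
  exact (Category.assoc _ _ _).symm.trans
    ((congrArg (· ≫ g) (hA.minimalComplex_d M n)).symm.trans hg)

theorem subsingleton_syzygy_succ_of_isZero_ext {n : ℕ}
    (h : IsZero (((Ext ℤ (ModuleCat.{u} A) (n + 1)).obj (op M)).obj
      (ModuleCat.of A (Ring.jacobson A)))) :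
    Subsingleton (hA.syzygy M (n + 1)) := by
  have hcover := hA.isProjectiveCoverHom_termπ M n
  have : Projective (hA.term M n) := hcover.1
  refine Submodule.subsingleton_iff_eq_bot.2 <|
    Submodule.eq_bot_of_forall_sup_eq_top_of_forall_extend hcover.2.2 fun φ => ?_
  obtain ⟨g, hg⟩ := hA.exists_syzygyι_comp_eq_of_isZero_ext M h (ModuleCat.ofHom φ)
  exact ⟨g.hom, congrArg ModuleCat.Hom.hom hg⟩

theorem subsingleton_term {n : ℕ} (h : Subsingleton (hA.syzygy M n)) :
    Subsingleton (hA.term M n) :=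
  (hA.termπ M n).hom.subsingleton_of_forall_sup_ker_eq_top (hA.isProjectiveCoverHom_termπ M n).2.2

theorem subsingleton_syzygy_of_le {n i : ℕ} (h : Subsingleton (hA.syzygy M n)) (hi : n ≤ i) :
    Subsingleton (hA.syzygy M i) := by
  induction i, hi using Nat.le_induction with
  | base => exact h
  | succ i _ ih =>
    have := hA.subsingleton_term M ih
    exact inferInstanceAs (Subsingleton (LinearMap.ker (hA.termπ M i).hom))

end Paper.IsSemiperfectRing

open Paper in
theorem statement_2 (A : Type u) [Ring A] [IsNoetherianRing A]
    (hA : IsSemiperfectRing A)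
    (M : Type u) [AddCommGroup M] [Module A M] [Module.Finite A M] (d : ℕ)
    (h : extVanish A (ModuleCat.of A M) (ModuleCat.of A ↥(jac A)) (d + 1)) :
    projDim A (ModuleCat.of A M) ≤ (d : ℕ∞) := by
  rw [jac, Ideal.jacobson_bot] at h
  have hΩ := hA.subsingleton_syzygy_succ_of_isZero_ext (ModuleCat.of A M)
    (@ModuleCat.isZero_of_subsingleton _ _ _ h)
  refine sInf_le ⟨d, rfl, fun N i hi => ?_⟩
  have := hA.subsingleton_term _ (hA.subsingleton_syzygy_of_le _ hΩ hi)
  exact ModuleCat.subsingleton_of_isZero <|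
    (hA.minimalResolution _).isZero_ext_of_isZero (ModuleCat.isZero_of_subsingleton (hA.term _ i)) N
end
end
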